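/- Let M be an even delta-matroid. Every almost pancyclic edge of the basis graph BG(M) is even pancyclic. (Equivalently: if M has exactly three bases then BG(M) is a triangle, and every even delta-matroid has no pair of bases B, B' with |B △ B'| ≥ 4 when it has only three bases.) -/

import Mathlib

open scoped symmDiff

/-- A delta-matroid: a finite ground set `E` and a nonempty family `B` of subsets of `E`
satisfying the symmetric exchange axiom. -/
structure DeltaMatroid (α : Type*) [DecidableEq α] where
  E : Finset α
  B : Finset (Finset α)
  nonempty : B.Nonempty
  subset_ground : ∀ S ∈ B, S ⊆ E
  exchange : ∀ B₁ ∈ B, ∀ B₂ ∈ B, ∀ e ∈ B₁ ∆ B₂,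
    ∃ f ∈ B₁ ∆ B₂, B₁ ∆ ({e, f} : Finset α) ∈ B

variable {α : Type*} [DecidableEq α]

/-- A delta-matroid is even if all bases have cardinalities of the same parity. -/
def DeltaMatroid.IsEven (M : DeltaMatroid α) : Prop :=
  ∀ B₁ ∈ M.B, ∀ B₂ ∈ M.B, B₁.card % 2 = B₂.card % 2

/-- `X` is a separator of `M` if `M` is the direct sum of its restrictions to `X`
and to `E \ X`; equivalently, bases can be freely recombined across `X`. -/
def DeltaMatroid.IsSeparator (M : DeltaMatroid α) (X : Finset α) : Prop :=
  X ⊆ M.E ∧ ∀ B₁ ∈ M.B, ∀ B₂ ∈ M.B, (B₁ ∩ X) ∪ (B₂ \ X) ∈ M.B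

/-- A component is a minimal nonempty separator. -/
def DeltaMatroid.IsComponent (M : DeltaMatroid α) (C : Finset α) : Prop :=
  M.IsSeparator C ∧ C.Nonempty ∧
    ∀ X, M.IsSeparator X → X.Nonempty → X ⊆ C → X = C

/-- The basis graph of a delta-matroid: vertices are the bases, two bases being
adjacent iff their symmetric difference has exactly two elements. -/
def DeltaMatroid.BG (M : DeltaMatroid α) : SimpleGraph ↥M.B where
  Adj S T := ((S : Finset α) ∆ (T : Finset α)).card = 2
  symm := by
    constructor
    intro S T h
    rwa [symmDiff_comm]
  loopless := by
    constructor
    intro S h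
    simp [symmDiff_self] at h

/-- The graph `G` has a cycle of length `k` through the edge `e`. -/
def CycleThroughEdge {V : Type*} (G : SimpleGraph V) (e : Sym2 V) (k : ℕ) : Prop :=
  ∃ (v : V) (c : G.Walk v v), c.IsCycle ∧ c.length = k ∧ e ∈ c.edges

/-- An edge is pancyclic if it lies in a cycle of every length `3 ≤ k ≤ n`. -/
def EdgePancyclic {V : Type*} [Fintype V] (G : SimpleGraph V) (e : Sym2 V) : Prop :=
  ∀ k, 3 ≤ k → k ≤ Fintype.card V → CycleThroughEdge G e k

/-- An edge is almost pancyclic if it lies in a cycle of every length `4 ≤ k ≤ n`. -/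
def EdgeAlmostPancyclic {V : Type*} [Fintype V] (G : SimpleGraph V) (e : Sym2 V) : Prop :=
  ∀ k, 4 ≤ k → k ≤ Fintype.card V → CycleThroughEdge G e k

/-- An edge is even pancyclic if it lies in a cycle of length `k` for every
`3 ≤ k ≤ n` with `k` even or `k = n`. -/
def EdgeEvenPancyclic {V : Type*} [Fintype V] (G : SimpleGraph V) (e : Sym2 V) : Prop :=
  ∀ k, 3 ≤ k → k ≤ Fintype.card V → (Even k ∨ k = Fintype.card V) →
    CycleThroughEdge G e k

/-- The hypercube graph `Q_d`: vertices `{0,1}^d`, adjacent iff they differ in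
exactly one coordinate. -/
def hypercube (d : ℕ) : SimpleGraph (Fin d → Bool) where
  Adj x y := ∃ i, x i ≠ y i ∧ ∀ j, j ≠ i → x j = y j
  symm := by
    constructor
    rintro x y ⟨i, h, hj⟩
    exact ⟨i, h.symm, fun j hne => (hj j hne).symm⟩
  loopless := by
    constructor
    rintro x ⟨i, h, -⟩
    exact h rfl

/-!
The only case not covered by almost pancyclicity is `k = n = 3`, so the claim is that a basis
graph with three vertices is a triangle. If two bases `B₁, B₂` had `|B₁ ∆ B₂| > 2`, then for
`e ∈ B₁ ∆ B₂` the exchange axiom, applied from `B₁` and from `B₂`, gives bases `B₁ ∆ {e, f}` and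
`B₂ ∆ {e, g}` (evenness forces `f ≠ e` and `g ≠ e`); they differ from `B₁`, `B₂` and from each
other, since exactly one of them contains `e`. That makes four bases.
-/

theorem Finset.card_symmDiff_add_two_mul_card_inter (s t : Finset α) :
    (s ∆ t).card + 2 * (s ∩ t).card = s.card + t.card := by
  have hsub : s ∩ t ⊆ s ∪ t := inter_subset_left.trans subset_union_left
  rw [symmDiff_eq_sup_sdiff_inf, sup_eq_union, inf_eq_inter, card_sdiff_of_subset hsub,
    ← card_union_add_card_inter s t]
  have := card_le_card hsub
  omega

namespace DeltaMatroid

variable {M : DeltaMatroid α} {B₁ B₂ : Finset α}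

theorem IsEven.even_card_symmDiff (hM : M.IsEven) (h₁ : B₁ ∈ M.B) (h₂ : B₂ ∈ M.B) :
    Even (B₁ ∆ B₂).card := by
  have := hM B₁ h₁ B₂ h₂
  have := Finset.card_symmDiff_add_two_mul_card_inter B₁ B₂
  rw [Nat.even_iff]
  omega

theorem IsEven.exists_exchange (hM : M.IsEven) (h₁ : B₁ ∈ M.B) (h₂ : B₂ ∈ M.B) {e : α}
    (he : e ∈ B₁ ∆ B₂) : ∃ f, f ≠ e ∧ B₁ ∆ {e, f} ∈ M.B := by
  obtain ⟨f, -, hf⟩ := M.exchange B₁ h₁ B₂ h₂ e he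
  refine ⟨f, ?_, hf⟩
  rintro rfl
  have := hM.even_card_symmDiff h₁ hf
  simp_all

theorem IsEven.four_le_card_B (hM : M.IsEven) (h₁ : B₁ ∈ M.B) (h₂ : B₂ ∈ M.B)
    (hlt : 2 < (B₁ ∆ B₂).card) : 4 ≤ M.B.card := by
  obtain ⟨e, he⟩ := Finset.card_pos.mp (by omega : 0 < (B₁ ∆ B₂).card)
  obtain ⟨f, hfe, hf⟩ := hM.exists_exchange h₁ h₂ he
  obtain ⟨g, hge, hg⟩ := hM.exists_exchange h₂ h₁ (symmDiff_comm B₁ B₂ ▸ he)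
  have hne : ∀ {B B' : Finset α} {x : α}, x ≠ e → 2 < (B ∆ B').card →
      B ∆ {e, x} ≠ B ∧ B ∆ {e, x} ≠ B' := fun hxe hcard => by
    refine ⟨fun h => ?_, fun h => ?_⟩
    · simp [symmDiff_eq_left] at h
    · rw [← h, symmDiff_symmDiff_cancel_left, Finset.card_pair hxe.symm] at hcard
      omega
  obtain ⟨hf₁, hf₂⟩ := hne hfe hlt
  obtain ⟨hg₂, hg₁⟩ := hne hge (symmDiff_comm B₁ B₂ ▸ hlt)
  have hfg : B₁ ∆ {e, f} ≠ B₂ ∆ {e, g} := fun h => by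
    have := congrArg (e ∈ ·) h
    simp [Finset.mem_symmDiff] at he this
    tauto
  have h₁₂ : B₁ ≠ B₂ := by rintro rfl; simp at hlt
  calc 4 = ({B₁, B₂, B₁ ∆ {e, f}, B₂ ∆ {e, g}} : Finset (Finset α)).card := by
        rw [Finset.card_insert_of_notMem, Finset.card_insert_of_notMem,
          Finset.card_pair hfg] <;> simp [*, Ne.symm hf₁, Ne.symm hf₂, Ne.symm hg₁, Ne.symm hg₂]
    _ ≤ M.B.card := Finset.card_le_card (by simp [Finset.insert_subset_iff, *])

theorem IsEven.card_symmDiff_eq_two (hM : M.IsEven) (hB : M.B.card ≤ 3) (h₁ : B₁ ∈ M.B)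
    (h₂ : B₂ ∈ M.B) (hne : B₁ ≠ B₂) : (B₁ ∆ B₂).card = 2 := by
  have hpos : (B₁ ∆ B₂).card ≠ 0 := by simpa [symmDiff_eq_bot] using hne
  have hle : (B₁ ∆ B₂).card ≤ 2 := not_lt.mp fun h => by
    have := hM.four_le_card_B h₁ h₂ h
    omega
  obtain ⟨k, hk⟩ := hM.even_card_symmDiff h₁ h₂
  omega

end DeltaMatroid

theorem cycleThroughEdge_three {V : Type*} {G : SimpleGraph V} {a b c : V} (hab : G.Adj a b)
    (hbc : G.Adj b c) (hca : G.Adj c a) : CycleThroughEdge G s(a, b) 3 := by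
  refine ⟨a, .cons hab (.cons hbc (.cons hca .nil)), ?_, rfl, by simp⟩
  simp [SimpleGraph.Walk.cons_isCycle_iff, hab.ne, hbc.ne, hca.ne, hab.ne.symm, hca.ne.symm]

/-- In the basis graph of an even delta-matroid, every almost pancyclic edge is
even pancyclic. -/
theorem statement13 (M : DeltaMatroid α) (hM : M.IsEven) (e : Sym2 ↥M.B)
    (he : e ∈ M.BG.edgeSet) (hap : EdgeAlmostPancyclic M.BG e) :
    EdgeEvenPancyclic M.BG e := by
  intro k hk3 hkn hev
  rcases Nat.lt_or_ge k 4 with hk4 | hk4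
  · obtain rfl : k = 3 := by omega
    have hn : Fintype.card ↥M.B = 3 := (hev.resolve_left (by decide)).symm
    have hadj : ∀ x y : ↥M.B, x ≠ y → M.BG.Adj x y := fun x y hxy =>
      hM.card_symmDiff_eq_two (by simp [← hn]) x.2 y.2 (Subtype.coe_ne_coe.mpr hxy)
    induction e using Sym2.ind with
    | _ a b =>
    obtain ⟨c, hca, hcb⟩ := ENat.exists_ne_ne_of_three_le (α := ↥M.B) (by simp [hn]) a b
    exact cycleThroughEdge_three he (hadj b c hcb.symm) (hadj c a hca)
  · exact hap k hk4 hkn
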